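/- arXiv:math/0304480 — 2 statements merged into one kernel-verified Lean document; each statement's English description precedes it below -/
import Mathlib

section
/- Let A be an abelian group of finite exponent n (i.e., n•a = 0 for all a ∈ A, with n > 0). Then the intersection of all finite-index subgroups of A is trivial. -/
/-!
Every nonzero `a : A` is detected by a character `c : A → ℚ/ℤ`. Since `n • A = 0`, the image of
`c` lies in the `n`-torsion of `ℚ/ℤ`, which is finite, so `ker c` is a finite-index subgroup
avoiding `a`.
-/

theorem AddMonoidHom.finite_range_of_forall_nsmul_eq_zero {A : Type*} [AddCommGroup A] {n : ℕ}
    (hn : 0 < n) (h : ∀ a : A, n • a = 0) (c : A →+ AddCircle (1 : ℚ)) : Finite c.range := by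
  refine Set.Finite.to_subtype <| (AddCircle.finite_torsion (1 : ℚ) hn).subset ?_
  rintro _ ⟨a, rfl⟩
  simp only [Set.mem_ofPred_eq, ← map_nsmul, h, map_zero]

theorem AddGroup.residuallyFinite_of_forall_nsmul_eq_zero {A : Type*} [AddCommGroup A] {n : ℕ}
    (hn : 0 < n) (h : ∀ a : A, n • a = 0) : AddGroup.ResiduallyFinite A := by
  rw [AddGroup.residuallyFinite_iff_exists_finiteIndex]
  intro a ha
  obtain ⟨c, hc⟩ := CharacterModule.exists_character_apply_ne_zero_of_ne_zero ha
  have := c.finite_range_of_forall_nsmul_eq_zero hn h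
  exact ⟨c.ker, AddSubgroup.finiteIndex_ker c, hc⟩

/-- Let A be an abelian group of finite exponent n (n•a = 0 for all a, n > 0).
Then the intersection of all finite-index subgroups of A is trivial. -/
theorem stmt0 (A : Type*) [AddCommGroup A] (n : ℕ) (hn : 0 < n)
    (h : ∀ a : A, n • a = 0) :
    (⨅ (H : AddSubgroup A) (_ : H.FiniteIndex), H) = ⊥ := by
  have := AddGroup.residuallyFinite_iff_forall_finiteIndex.mp
    (AddGroup.residuallyFinite_of_forall_nsmul_eq_zero hn h)
  rw [AddSubgroup.eq_bot_iff_forall]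
  intro a ha
  exact this a fun H _ ↦ AddSubgroup.mem_iInf.mp (AddSubgroup.mem_iInf.mp ha H) ‹_›
end

section
/- Let A be an abelian group of finite exponent n > 0, and let a ∈ A be nonzero. Then there exists a group homomorphism φ : A → ℤ/nℤ with φ(a) ≠ 0. -/
/-- `ZMod n` is self-injective (Baer's criterion form). -/
lemma zmod_baer (n : ℕ) (hn : 0 < n) : Module.Baer (ZMod n) (ZMod n) := by
  haveI : NeZero n := ⟨hn.ne'⟩
  haveI : IsPrincipalIdealRing (ZMod n) :=
    IsPrincipalIdealRing.of_surjective (Int.castRingHom (ZMod n)) ZMod.intCast_surjective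
  intro I g
  obtain ⟨b, hb⟩ := (IsPrincipalIdealRing.principal I).principal
  have hbmem : b ∈ I := by rw [hb]; exact Ideal.subset_span rfl
  set c : ZMod n := g ⟨b, hbmem⟩ with hc
  set m : ℕ := Nat.gcd b.val n with hm
  have hmn : m ∣ n := Nat.gcd_dvd_right _ _
  have hmb : m ∣ b.val := Nat.gcd_dvd_left _ _
  have hm0 : 0 < m := Nat.gcd_pos_of_pos_right _ hn
  have hq0 : 0 < n / m := Nat.div_pos (Nat.le_of_dvd hn hmn) hm0
  -- (n/m) * b = 0 in ZMod n
  have hb0 : ((n / m : ℕ) : ZMod n) * b = 0 := by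
    obtain ⟨b', hb'⟩ := hmb
    have : ((n / m) * b.val : ℕ) = n * b' := by
      rw [hb', ← mul_assoc, Nat.div_mul_cancel hmn]
    calc ((n / m : ℕ) : ZMod n) * b = (((n / m) * b.val : ℕ) : ZMod n) := by
          push_cast [ZMod.natCast_val, ZMod.cast_id]; ring
      _ = ((n * b' : ℕ) : ZMod n) := by rw [this]
      _ = 0 := by push_cast [ZMod.natCast_self]; ring
  -- hence (n/m) * c = 0
  have hc0 : ((n / m : ℕ) : ZMod n) * c = 0 := by
    have : ((n / m : ℕ) : ZMod n) • (⟨b, hbmem⟩ : I) = 0 := by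
      apply Subtype.ext
      simpa [smul_eq_mul] using hb0
    rw [hc, ← smul_eq_mul, ← map_smul, this, map_zero]
  -- hence m ∣ c.val
  have hmc : m ∣ c.val := by
    have hdvd : (n : ℕ) ∣ (n / m) * c.val := by
      rw [← ZMod.natCast_eq_zero_iff]
      push_cast [ZMod.natCast_val, ZMod.cast_id]
      exact hc0
    have h2 : (n / m) * m ∣ (n / m) * c.val := by
      rwa [Nat.div_mul_cancel hmn]
    exact (Nat.mul_dvd_mul_iff_left hq0).mp h2
  -- the solution r of r * b = c
  set r : ZMod n := b⁻¹ * ((c.val / m : ℕ) : ZMod n) with hr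
  have hrb : r * b = c := by
    calc r * b = (b * b⁻¹) * ((c.val / m : ℕ) : ZMod n) := by rw [hr]; ring
      _ = ((m : ℕ) : ZMod n) * ((c.val / m : ℕ) : ZMod n) := by rw [ZMod.mul_inv_eq_gcd]
      _ = ((m * (c.val / m) : ℕ) : ZMod n) := by push_cast; ring
      _ = ((c.val : ℕ) : ZMod n) := by rw [Nat.mul_div_cancel' hmc]
      _ = c := by rw [ZMod.natCast_val, ZMod.cast_id]
  refine ⟨LinearMap.toSpanSingleton (ZMod n) (ZMod n) r, ?_⟩
  intro x hx
  obtain ⟨s, rfl⟩ := Ideal.mem_span_singleton'.mp (hb ▸ hx)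
  have hsb : (⟨s * b, hx⟩ : I) = s • (⟨b, hbmem⟩ : I) := by
    apply Subtype.ext; simp [smul_eq_mul]
  rw [hsb, map_smul]
  simp only [LinearMap.toSpanSingleton_apply, smul_eq_mul, ← hc]
  rw [← hrb]; ring

/-- Let A be abelian of finite exponent n > 0 and a ∈ A nonzero. Then there is
a homomorphism φ : A → ℤ/nℤ with φ a ≠ 0. -/
theorem stmt1 (A : Type*) [AddCommGroup A] (n : ℕ) (hn : 0 < n)
    (h : ∀ x : A, n • x = 0) (a : A) (ha : a ≠ 0) :
    ∃ φ : A →+ ZMod n, φ a ≠ 0 := by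
  haveI : NeZero n := ⟨hn.ne'⟩
  letI : Module (ZMod n) A := AddCommGroup.zmodModule h
  set d : ℕ := addOrderOf a with hd
  have hdn : d ∣ n := addOrderOf_dvd_of_nsmul_eq_zero (h a)
  have hd0 : 0 < d := Nat.pos_of_dvd_of_pos hdn hn
  have hd1 : d ≠ 1 := fun h1 => ha (AddMonoid.addOrderOf_eq_one_iff.mp h1)
  have hd2 : 2 ≤ d := by omega
  haveI : NeZero d := ⟨hd0.ne'⟩
  have hnd_pos : 0 < n / d := Nat.div_pos (Nat.le_of_dvd hn hdn) hd0
  have hnd_lt : n / d < n := Nat.div_lt_self hn hd2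
  -- ZMod d is a ZMod n module
  have hzd : ∀ x : ZMod d, n • x = 0 := by
    intro x
    rw [nsmul_eq_mul]
    have : ((n : ℕ) : ZMod d) = 0 := (ZMod.natCast_eq_zero_iff _ _).mpr hdn
    rw [this, zero_mul]
  letI : Module (ZMod n) (ZMod d) := AddCommGroup.zmodModule hzd
  -- the injection ZMod d →+ A, 1 ↦ a
  have hda : (zmultiplesHom A a) (d : ℤ) = 0 := by
    show (d : ℤ) • a = 0
    rw [natCast_zsmul]
    exact addOrderOf_nsmul_eq_zero a
  let i₀ : ZMod d →+ A := ZMod.lift d ⟨zmultiplesHom A a, hda⟩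
  have hi₀a : i₀ (1 : ZMod d) = a := by
    have : ((1 : ℤ) : ZMod d) = 1 := by push_cast; rfl
    rw [← this, ZMod.lift_coe]
    show (1 : ℤ) • a = a
    rw [one_zsmul]
  have hi₀ : Function.Injective i₀ := by
    rw [injective_iff_map_eq_zero]
    intro x hx
    have hxv : ((x.val : ℤ) : ZMod d) = x := by
      push_cast [ZMod.natCast_val, ZMod.cast_id]; rfl
    have hxa : (x.val : ℕ) • a = 0 := by
      rw [← hxv, ZMod.lift_coe] at hx
      rw [← natCast_zsmul]
      exact hx
    have hdx : d ∣ x.val := addOrderOf_dvd_iff_nsmul_eq_zero.mpr hxa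
    have : x.val = 0 := Nat.eq_zero_of_dvd_of_lt hdx (ZMod.val_lt x)
    exact (ZMod.val_eq_zero x).mp this
  -- the map ZMod d →+ ZMod n, 1 ↦ n / d
  have hdg : (zmultiplesHom (ZMod n) ((n / d : ℕ) : ZMod n)) (d : ℤ) = 0 := by
    show (d : ℤ) • ((n / d : ℕ) : ZMod n) = 0
    rw [natCast_zsmul, nsmul_eq_mul]
    calc ((d : ℕ) : ZMod n) * ((n / d : ℕ) : ZMod n) = ((d * (n / d) : ℕ) : ZMod n) := by push_cast; ring
      _ = ((n : ℕ) : ZMod n) := by rw [Nat.mul_div_cancel' hdn]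
      _ = 0 := ZMod.natCast_self n
  let g₀ : ZMod d →+ ZMod n := ZMod.lift d ⟨zmultiplesHom (ZMod n) ((n / d : ℕ) : ZMod n), hdg⟩
  have hg₀1 : g₀ (1 : ZMod d) = ((n / d : ℕ) : ZMod n) := by
    have h1 : ((1 : ℤ) : ZMod d) = 1 := by push_cast; rfl
    rw [← h1]
    show ZMod.lift d ⟨zmultiplesHom (ZMod n) ((n / d : ℕ) : ZMod n), hdg⟩ ((1 : ℤ) : ZMod d) = _
    rw [ZMod.lift_coe, zmultiplesHom_apply, one_zsmul]
  -- upgrade to ZMod n linear maps and extend by injectivity of ZMod n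
  let i : ZMod d →ₗ[ZMod n] A := i₀.toZModLinearMap n
  let g : ZMod d →ₗ[ZMod n] ZMod n := g₀.toZModLinearMap n
  obtain ⟨φ', hφ'⟩ := (zmod_baer n hn).extension_property i hi₀ g
  refine ⟨φ'.toAddMonoidHom, ?_⟩
  have h1 := LinearMap.congr_fun hφ' (1 : ZMod d)
  simp only [LinearMap.comp_apply, i, g, AddMonoidHom.coe_toZModLinearMap] at h1
  rw [hi₀a, hg₀1] at h1
  simp only [LinearMap.toAddMonoidHom_coe]
  rw [h1, Ne, ZMod.natCast_eq_zero_iff]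
  intro hdvd
  have := Nat.le_of_dvd hnd_pos hdvd
  omega
end
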